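/- Robustness bound: let q be a full-support probability mass function on 𝒳^n and let w(y|x) be a mechanism such that, under the joint law q(x)·w(y|x), the output Y is independent of X_K. Let p be another probability mass function on 𝒳^n and consider the joint law p(x)·w(y|x). Then the privacy leakage under p, measured as the mutual information D(p_{X_K,Y} ‖ p_{X_K} × p_Y), is at most the Kullback–Leibler divergence between the two data distributions: D(p_{X_K,Y} ‖ p_{X_K} × p_Y) ≤ D(p ‖ q). -/

import Mathlib

open Finset
open scoped Classical

noncomputable section

namespace GenotypeHiding

variable {X : Type} [Fintype X] [DecidableEq X]

/-- Kullback–Leibler divergence `D(μ ‖ ν) = ∑_z μ(z) log (μ(z)/ν(z))` between two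
probability mass functions on a finite set (with the convention `0 log 0 = 0`). -/
def klDiv {Z : Type} [Fintype Z] (μ ν : Z → ℝ) : ℝ :=
  ∑ z : Z, μ z * Real.log (μ z / ν z)

/-- Restriction of a sequence `x` to the sensitive positions `K`. -/
def restr {n : ℕ} (K : Finset (Fin n)) (x : Fin n → X) : ↥K → X := fun i => x (i : Fin n)

/-- The joint law of `(X_K, Y)` induced by the data distribution `p` and the mechanism `w`. -/
def jointKY {n : ℕ} (p : (Fin n → X) → ℝ) (w : (Fin n → X) → (Fin n → Option X) → ℝ)
    (K : Finset (Fin n)) : (↥K → X) × (Fin n → Option X) → ℝ :=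
  fun z => ∑ x : Fin n → X, if restr K x = z.1 then p x * w x z.2 else 0

/-- The marginal law of `X_K` under the data distribution `p`. -/
def margK {n : ℕ} (p : (Fin n → X) → ℝ) (K : Finset (Fin n)) (u : ↥K → X) : ℝ :=
  ∑ x : Fin n → X, if restr K x = u then p x else 0

/-- The marginal law of `Y` induced by the data distribution `p` and the mechanism `w`. -/
def margY {n : ℕ} (p : (Fin n → X) → ℝ) (w : (Fin n → X) → (Fin n → Option X) → ℝ)
    (y : Fin n → Option X) : ℝ :=
  ∑ x : Fin n → X, p x * w x y

/-- The mutual information `I(X_K; Y)` under the joint law induced by `p` and `w`,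
expressed as the KL divergence between the joint law of `(X_K, Y)` and the product of
its marginals. -/
def mutualInfoKY {n : ℕ} (p : (Fin n → X) → ℝ)
    (w : (Fin n → X) → (Fin n → Option X) → ℝ) (K : Finset (Fin n)) : ℝ :=
  klDiv (jointKY p w K) (fun z => margK p K z.1 * margY p w z.2)


/-! Mutual information minimises `ν₁, ν₂ ↦ D(μ ‖ ν₁ ⊗ ν₂)` over product laws: the excess is
`D(μ₁ ‖ ν₁) + D(μ₂ ‖ ν₂) ≥ 0` for the marginals `μ₁, μ₂` of `μ`. Independence under `q` says that
`q_{X_K} ⊗ q_Y = q_{X_K,Y}`, so the leakage under `p` is at most `D(p_{X_K,Y} ‖ q_{X_K,Y})`. Both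
laws are images of `p ⊗ w` and `q ⊗ w` under `(x, y) ↦ (x_K, y)`, and by the log-sum inequality on
each fibre such an image cannot increase the divergence; finally `D(p ⊗ w ‖ q ⊗ w) = D(p ‖ q)`. -/

section Divergence

variable {ι : Type*}

lemma sub_le_mul_log_div {x y : ℝ} (hx : 0 ≤ x) (hy : 0 ≤ y) (hxy : y = 0 → x = 0) :
    x - y ≤ x * Real.log (x / y) := by
  rcases hx.eq_or_lt with rfl | hx
  · simpa using hy
  have hy : 0 < y := hy.lt_of_ne fun h => hx.ne' (hxy h.symm)
  calc x - y = x * (1 - (x / y)⁻¹) := by field_simp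
    _ ≤ x * Real.log (x / y) :=
      mul_le_mul_of_nonneg_left (Real.one_sub_inv_le_log_of_pos (div_pos hx hy)) hx.le

lemma sum_sub_sum_le_sum_mul_log_div (s : Finset ι) {a b : ι → ℝ} (ha : ∀ i, 0 ≤ a i)
    (hb : ∀ i, 0 ≤ b i) (hab : ∀ i, b i = 0 → a i = 0) :
    ∑ i ∈ s, a i - ∑ i ∈ s, b i ≤ ∑ i ∈ s, a i * Real.log (a i / b i) := by
  rw [← sum_sub_distrib]
  exact sum_le_sum fun i _ => sub_le_mul_log_div (ha i) (hb i) (hab i)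

lemma mul_log_sum_div_sum_le (s : Finset ι) {a b : ι → ℝ} (ha : ∀ i, 0 ≤ a i)
    (hb : ∀ i, 0 ≤ b i) (hab : ∀ i, b i = 0 → a i = 0) :
    (∑ i ∈ s, a i) * Real.log ((∑ i ∈ s, a i) / ∑ i ∈ s, b i) ≤
      ∑ i ∈ s, a i * Real.log (a i / b i) := by
  set A := ∑ i ∈ s, a i
  set B := ∑ i ∈ s, b i
  have hA0 : 0 ≤ A := sum_nonneg fun i _ => ha i
  rcases hA0.eq_or_lt with hA | hA
  · have ha0 := (sum_eq_zero_iff_of_nonneg fun i _ => ha i).1 hA.symm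
    rw [← hA, zero_mul, sum_eq_zero fun i hi => by rw [ha0 i hi, zero_mul]]
  have hB : 0 < B := by
    refine (sum_nonneg fun i _ => hb i).lt_of_ne fun hB => hA.ne' (sum_eq_zero fun i hi => ?_)
    exact hab i ((sum_eq_zero_iff_of_nonneg fun i _ => hb i).1 hB.symm i hi)
  set c := A / B
  have hc : 0 < c := div_pos hA hB
  -- Gibbs' inequality against the rescaled weights `c • b`, which have the same mass as `a`
  have key := sum_sub_sum_le_sum_mul_log_div s ha (fun i => mul_nonneg hc.le (hb i))
    fun i h => hab i ((mul_eq_zero.1 h).resolve_left hc.ne')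
  have hsplit : ∀ i, a i * Real.log (a i / (c * b i)) =
      a i * Real.log (a i / b i) - a i * Real.log c := by
    intro i
    by_cases hai : a i = 0
    · simp [hai]
    have hbi : b i ≠ 0 := fun h => hai (hab i h)
    rw [div_mul_eq_div_div_swap, Real.log_div (div_ne_zero hai hbi) hc.ne', mul_sub]
  rw [← mul_sum, div_mul_cancel₀ A hB.ne', sub_self, sum_congr rfl fun i _ => hsplit i,
    sum_sub_distrib, ← sum_mul] at key
  linarith

end Divergence

section Laws

variable {α β : Type}

lemma sum_sub_sum_le_klDiv [Fintype α] {μ ν : α → ℝ} (hμ : ∀ a, 0 ≤ μ a) (hν : ∀ a, 0 ≤ ν a)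
    (hμν : ∀ a, ν a = 0 → μ a = 0) : ∑ a, μ a - ∑ a, ν a ≤ klDiv μ ν :=
  sum_sub_sum_le_sum_mul_log_div univ hμ hν hμν

def pushforward [Fintype α] (f : α → β) (μ : α → ℝ) (b : β) : ℝ :=
  ∑ a, if f a = b then μ a else 0

lemma pushforward_eq_sum_filter [Fintype α] (f : α → β) (μ : α → ℝ) (b : β) :
    pushforward f μ b = ∑ a with f a = b, μ a :=
  (sum_filter _ _).symm

lemma pushforward_nonneg [Fintype α] (f : α → β) {μ : α → ℝ} (hμ : ∀ a, 0 ≤ μ a) (b : β) :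
    0 ≤ pushforward f μ b := by
  rw [pushforward_eq_sum_filter]
  exact sum_nonneg fun a _ => hμ a

lemma sum_pushforward [Fintype α] [Fintype β] (f : α → β) (μ : α → ℝ) :
    ∑ b, pushforward f μ b = ∑ a, μ a := by
  simp only [pushforward_eq_sum_filter]
  exact sum_fiberwise _ _ _

lemma pushforward_eq_zero_of_eq_zero [Fintype α] (f : α → β) {μ ν : α → ℝ} (hν : ∀ a, 0 ≤ ν a)
    (hμν : ∀ a, ν a = 0 → μ a = 0) {b : β} (hb : pushforward f ν b = 0) :
    pushforward f μ b = 0 := by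
  rw [pushforward_eq_sum_filter] at hb ⊢
  have hν0 := (sum_eq_zero_iff_of_nonneg fun a _ => hν a).1 hb
  exact sum_eq_zero fun a ha => hμν a (hν0 a ha)

theorem klDiv_pushforward_le [Fintype α] [Fintype β] (f : α → β) {μ ν : α → ℝ} (hμ : ∀ a, 0 ≤ μ a)
    (hν : ∀ a, 0 ≤ ν a) (hμν : ∀ a, ν a = 0 → μ a = 0) :
    klDiv (pushforward f μ) (pushforward f ν) ≤ klDiv μ ν := by
  unfold klDiv
  simp only [pushforward_eq_sum_filter]
  rw [← sum_fiberwise univ f]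
  exact sum_le_sum fun b _ => mul_log_sum_div_sum_le _ hμ hν hμν

def compProd (p : α → ℝ) (w : α → β → ℝ) (z : α × β) : ℝ := p z.1 * w z.1 z.2

lemma compProd_nonneg {p : α → ℝ} {w : α → β → ℝ} (hp : ∀ a, 0 ≤ p a)
    (hw : ∀ a b, 0 ≤ w a b) (z : α × β) : 0 ≤ compProd p w z :=
  mul_nonneg (hp z.1) (hw z.1 z.2)

lemma compProd_eq_zero_of_eq_zero {p q : α → ℝ} {w : α → β → ℝ}
    (hpq : ∀ a, q a = 0 → p a = 0) {z : α × β} (hz : compProd q w z = 0) :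
    compProd p w z = 0 := by
  rcases mul_eq_zero.1 hz with h | h
  · simp [compProd, hpq _ h]
  · simp [compProd, h]

lemma sum_compProd [Fintype α] [Fintype β] (p : α → ℝ) {w : α → β → ℝ} (hw : ∀ a, ∑ b, w a b = 1) :
    ∑ z, compProd p w z = ∑ a, p a := by
  simp only [compProd, Fintype.sum_prod_type, ← mul_sum, hw, mul_one]

lemma klDiv_compProd [Fintype α] [Fintype β] (p q : α → ℝ) {w : α → β → ℝ} (hw0 : ∀ a b, 0 ≤ w a b)
    (hw1 : ∀ a, ∑ b, w a b = 1) : klDiv (compProd p w) (compProd q w) = klDiv p q := by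
  have hterm : ∀ a b, p a * w a b * Real.log (p a * w a b / (q a * w a b)) =
      p a * Real.log (p a / q a) * w a b := by
    intro a b
    rcases (hw0 a b).eq_or_lt with h | h
    · simp [← h]
    · rw [mul_div_mul_right _ _ h.ne']
      ring
  simp only [klDiv, compProd, Fintype.sum_prod_type, hterm, ← mul_sum, hw1, mul_one]

def marginalFst [Fintype β] (μ : α × β → ℝ) (a : α) : ℝ := ∑ b, μ (a, b)

def marginalSnd [Fintype α] (μ : α × β → ℝ) (b : β) : ℝ := ∑ a, μ (a, b)

lemma sum_marginalFst [Fintype α] [Fintype β] (μ : α × β → ℝ) : ∑ a, marginalFst μ a = ∑ z, μ z :=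
  (Fintype.sum_prod_type μ).symm

lemma sum_marginalSnd [Fintype α] [Fintype β] (μ : α × β → ℝ) : ∑ b, marginalSnd μ b = ∑ z, μ z :=
  (Fintype.sum_prod_type_right μ).symm

lemma klDiv_prod_marginals_add [Fintype α] [Fintype β] {μ : α × β → ℝ} (hμ : ∀ z, 0 ≤ μ z)
    {ν₁ : α → ℝ} {ν₂ : β → ℝ} (hμν : ∀ z, ν₁ z.1 * ν₂ z.2 = 0 → μ z = 0) :
    klDiv μ (fun z => marginalFst μ z.1 * marginalSnd μ z.2) + klDiv (marginalFst μ) ν₁ +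
      klDiv (marginalSnd μ) ν₂ = klDiv μ (fun z => ν₁ z.1 * ν₂ z.2) := by
  have hfst : klDiv (marginalFst μ) ν₁ =
      ∑ z, μ z * Real.log (marginalFst μ z.1 / ν₁ z.1) := by
    simp only [klDiv, marginalFst, sum_mul, Fintype.sum_prod_type]
  have hsnd : klDiv (marginalSnd μ) ν₂ =
      ∑ z, μ z * Real.log (marginalSnd μ z.2 / ν₂ z.2) := by
    simp only [klDiv, marginalSnd, sum_mul, Fintype.sum_prod_type_right]
  rw [hfst, hsnd, klDiv, klDiv, ← sum_add_distrib, ← sum_add_distrib]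
  refine sum_congr rfl fun z _ => ?_
  rcases (hμ z).eq_or_lt with h | h
  · simp [← h]
  have h₁ : marginalFst μ z.1 ≠ 0 :=
    (h.trans_le (single_le_sum (fun b _ => hμ (z.1, b)) (mem_univ z.2))).ne'
  have h₂ : marginalSnd μ z.2 ≠ 0 :=
    (h.trans_le (single_le_sum (fun a _ => hμ (a, z.2)) (mem_univ z.1))).ne'
  have hν : ν₁ z.1 * ν₂ z.2 ≠ 0 := fun h0 => h.ne' (hμν z h0)
  rw [Real.log_div h.ne' (mul_ne_zero h₁ h₂), Real.log_div h.ne' hν, Real.log_div h₁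
    (left_ne_zero_of_mul hν), Real.log_div h₂ (right_ne_zero_of_mul hν), Real.log_mul h₁ h₂,
    Real.log_mul (left_ne_zero_of_mul hν) (right_ne_zero_of_mul hν)]
  ring

theorem klDiv_prod_marginals_le [Fintype α] [Fintype β] {μ : α × β → ℝ} (hμ : ∀ z, 0 ≤ μ z)
    {ν₁ : α → ℝ} {ν₂ : β → ℝ} (hν₁ : ∀ a, 0 ≤ ν₁ a) (hν₂ : ∀ b, 0 ≤ ν₂ b)
    (hμν : ∀ z, ν₁ z.1 * ν₂ z.2 = 0 → μ z = 0)
    (hmass₁ : ∑ a, ν₁ a ≤ ∑ z, μ z) (hmass₂ : ∑ b, ν₂ b ≤ ∑ z, μ z) :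
    klDiv μ (fun z => marginalFst μ z.1 * marginalSnd μ z.2) ≤
      klDiv μ (fun z => ν₁ z.1 * ν₂ z.2) := by
  have h₁ := sum_sub_sum_le_klDiv (μ := marginalFst μ) (fun a => sum_nonneg fun b _ => hμ (a, b))
    hν₁ fun a ha => sum_eq_zero fun b _ => hμν (a, b) (by simp [ha])
  have h₂ := sum_sub_sum_le_klDiv (μ := marginalSnd μ) (fun b => sum_nonneg fun a _ => hμ (a, b))
    hν₂ fun b hb => sum_eq_zero fun a _ => hμν (a, b) (by simp [hb])
  rw [sum_marginalFst] at h₁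
  rw [sum_marginalSnd] at h₂
  linarith [klDiv_prod_marginals_add hμ hμν]

end Laws

section Mechanism

variable {n : ℕ} {K : Finset (Fin n)} {p q : (Fin n → X) → ℝ}
  {w : (Fin n → X) → (Fin n → Option X) → ℝ}

lemma jointKY_eq_pushforward (p : (Fin n → X) → ℝ) (w : (Fin n → X) → (Fin n → Option X) → ℝ)
    (K : Finset (Fin n)) :
    jointKY p w K = pushforward (Prod.map (restr K) id) (compProd p w) := by
  funext ⟨u, y⟩
  simp [jointKY, pushforward, compProd, Fintype.sum_prod_type, ite_and]

lemma margK_eq_pushforward (p : (Fin n → X) → ℝ) (K : Finset (Fin n)) :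
    margK p K = pushforward (restr K) p := by
  funext u
  simp only [margK, pushforward]
  congr!

lemma marginalFst_jointKY (p : (Fin n → X) → ℝ) (hw : ∀ x, ∑ y, w x y = 1)
    (K : Finset (Fin n)) : marginalFst (jointKY p w K) = margK p K := by
  funext u
  simp only [marginalFst, jointKY, margK]
  rw [sum_comm]
  refine sum_congr rfl fun x _ => ?_
  split_ifs <;> simp [← mul_sum, hw]

lemma marginalSnd_jointKY (p : (Fin n → X) → ℝ) (w : (Fin n → X) → (Fin n → Option X) → ℝ)
    (K : Finset (Fin n)) : marginalSnd (jointKY p w K) = margY p w := by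
  funext y
  simp only [marginalSnd, jointKY, margY]
  rw [sum_comm]
  simp

lemma jointKY_nonneg (hp : ∀ x, 0 ≤ p x) (hw : ∀ x y, 0 ≤ w x y)
    (z : (↥K → X) × (Fin n → Option X)) :
    0 ≤ jointKY p w K z := by
  rw [jointKY_eq_pushforward]
  exact pushforward_nonneg _ (compProd_nonneg hp hw) z

lemma margK_nonneg (hp : ∀ x, 0 ≤ p x) (u : ↥K → X) : 0 ≤ margK p K u := by
  rw [margK_eq_pushforward]
  exact pushforward_nonneg _ hp u

lemma sum_jointKY (p : (Fin n → X) → ℝ) (hw : ∀ x, ∑ y, w x y = 1) (K : Finset (Fin n)) :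
    ∑ z, jointKY p w K z = ∑ x, p x := by
  rw [jointKY_eq_pushforward, sum_pushforward, sum_compProd p hw]

lemma sum_margK (p : (Fin n → X) → ℝ) (K : Finset (Fin n)) : ∑ u, margK p K u = ∑ x, p x := by
  rw [margK_eq_pushforward, sum_pushforward]

lemma jointKY_eq_zero_of_eq_zero (hq : ∀ x, 0 ≤ q x) (hw : ∀ x y, 0 ≤ w x y)
    (hpq : ∀ x, q x = 0 → p x = 0) {z : (↥K → X) × (Fin n → Option X)} (hz : jointKY q w K z = 0) :
    jointKY p w K z = 0 := by
  rw [jointKY_eq_pushforward] at hz ⊢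
  exact pushforward_eq_zero_of_eq_zero _ (compProd_nonneg hq hw)
    (fun _ => compProd_eq_zero_of_eq_zero hpq) hz

theorem klDiv_jointKY_le (hp : ∀ x, 0 ≤ p x) (hq : ∀ x, 0 ≤ q x) (hw0 : ∀ x y, 0 ≤ w x y)
    (hw1 : ∀ x, ∑ y, w x y = 1) (hpq : ∀ x, q x = 0 → p x = 0) :
    klDiv (jointKY p w K) (jointKY q w K) ≤ klDiv p q := by
  rw [jointKY_eq_pushforward, jointKY_eq_pushforward, ← klDiv_compProd p q hw0 hw1]
  exact klDiv_pushforward_le _ (compProd_nonneg hp hw0) (compProd_nonneg hq hw0)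
    fun _ => compProd_eq_zero_of_eq_zero hpq

end Mechanism

theorem robustness_bound_general {n : ℕ}
    (K : Finset (Fin n))
    (q : (Fin n → X) → ℝ) (hq0 : ∀ x, 0 < q x) (hq1 : ∑ x : Fin n → X, q x = 1)
    (w : (Fin n → X) → (Fin n → Option X) → ℝ)
    (hw0 : ∀ x y, 0 ≤ w x y) (hw1 : ∀ x, ∑ y : Fin n → Option X, w x y = 1)
    (hqpriv : ∀ z : (↥K → X) × (Fin n → Option X),
      jointKY q w K z = margK q K z.1 * margY q w z.2)
    (p : (Fin n → X) → ℝ) (hp0 : ∀ x, 0 ≤ p x) (hp1 : ∑ x : Fin n → X, p x = 1) :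
    mutualInfoKY p w K ≤ klDiv p q := by
  have hq : ∀ x, 0 ≤ q x := fun x => (hq0 x).le
  have hpq : ∀ x, q x = 0 → p x = 0 := fun x h => absurd h (hq0 x).ne'
  calc mutualInfoKY p w K
      = klDiv (jointKY p w K)
          (fun z => marginalFst (jointKY p w K) z.1 * marginalSnd (jointKY p w K) z.2) := by
        rw [marginalFst_jointKY p hw1, marginalSnd_jointKY]
        rfl
    _ ≤ klDiv (jointKY p w K) (fun z => margK q K z.1 * margY q w z.2) := by
        refine klDiv_prod_marginals_le (jointKY_nonneg hp0 hw0) (margK_nonneg hq)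
          (fun y => sum_nonneg fun x _ => mul_nonneg (hq x) (hw0 x y))
          (fun z hz => jointKY_eq_zero_of_eq_zero hq hw0 hpq ?_) ?_ ?_
        · rw [hqpriv, hz]
        · rw [sum_jointKY p hw1, sum_margK, hp1, hq1]
        · rw [sum_jointKY p hw1, ← marginalSnd_jointKY q w K, sum_marginalSnd, sum_jointKY q hw1,
            hp1, hq1]
    _ = klDiv (jointKY p w K) (jointKY q w K) := by rw [← funext hqpriv]
    _ ≤ klDiv p q := klDiv_jointKY_le hp0 hq hw0 hw1 hpq

/-- robustness bound, Theorem 4: let `q` be a full-support pmf on `𝒳^n`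
and `w` a mechanism whose output `Y` is independent of `X_K` under `q(x)·w(y|x)`.  For
any other pmf `p` on `𝒳^n`, the privacy leakage under `p(x)·w(y|x)`, measured as the
mutual information `I_p(X_K; Y) = D(p_{X_K,Y} ‖ p_{X_K} × p_Y)`, is at most the
Kullback–Leibler divergence between the two data distributions:
`I_p(X_K; Y) ≤ D(p ‖ q)`. -/
theorem robustness_bound {n : ℕ} (hn : 1 ≤ n) (hX : 2 ≤ Fintype.card X)
    (K : Finset (Fin n))
    (q : (Fin n → X) → ℝ) (hq0 : ∀ x, 0 < q x) (hq1 : ∑ x : Fin n → X, q x = 1)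
    (w : (Fin n → X) → (Fin n → Option X) → ℝ)
    (hw0 : ∀ x y, 0 ≤ w x y) (hw1 : ∀ x, ∑ y : Fin n → Option X, w x y = 1)
    (hqpriv : ∀ z : (↥K → X) × (Fin n → Option X),
      jointKY q w K z = margK q K z.1 * margY q w z.2)
    (p : (Fin n → X) → ℝ) (hp0 : ∀ x, 0 ≤ p x) (hp1 : ∑ x : Fin n → X, p x = 1) :
    mutualInfoKY p w K ≤ klDiv p q :=
  robustness_bound_general K q hq0 hq1 w hw0 hw1 hqpriv p hp0 hp1

end GenotypeHiding
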